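/- Let μ ≥ 0, α₂ > μ/2, τ₂ > 0, τ ≥ τ₂, λ > 0, q ∈ (0,1], R_q > 0, and ε ≥ 0. Let L, Q : ℝ^{d₁×d₂} → ℝ be differentiable, with T_L(Θ,Θ′) ≥ α₂‖Θ−Θ′‖_F² − τ₂‖Θ−Θ′‖_*² for all Θ,Θ′, and with Q(Θ) ≥ Q(Θ′) + ⟨⟨∇Q(Θ′), Θ−Θ′⟩⟩ − (μ/2)‖Θ−Θ′‖_F² for all Θ,Θ′. Set Ψ = L + Q + λ‖·‖_*. Let Θ̂ and Θᵗ be matrices such that (a) there exists G ∈ ℝ^{d₁×d₂} with ‖Θ‖_* ≥ ‖Θ̂‖_* + ⟨⟨G, Θ − Θ̂⟩⟩ for all Θ and ⟨⟨∇L(Θ̂) + ∇Q(Θ̂) + λG, Θᵗ − Θ̂⟩⟩ ≥ 0, (b) ‖Θᵗ − Θ̂‖_* ≤ 4√2 λ^{−q/2} R_q^{1/2} ‖Θᵗ − Θ̂‖_F + ε, and (c) λ^q ≥ 256 τ R_q / (2α₂ − μ). Then, writing T̄(Θ̂,Θᵗ) = (L+Q)(Θ̂) − (L+Q)(Θᵗ)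 − ⟨⟨∇L(Θᵗ) + ∇Q(Θᵗ), Θ̂ − Θᵗ⟩⟩, one has T̄(Θ̂,Θᵗ) ≥ −2τε² and Ψ(Θᵗ) − Ψ(Θ̂) ≥ ((2α₂ − μ)/4)‖Θᵗ − Θ̂‖_F² − 2τε². -/

import Mathlib

open Matrix Finset

attribute [local instance] Matrix.frobeniusNormedAddCommGroup Matrix.frobeniusNormedSpace

noncomputable section

variable {d₁ d₂ : ℕ}

/-- Trace inner product `⟨⟨A,B⟩⟩ = trace(AᵀB)`. -/
def tinner (A B : Matrix (Fin d₁) (Fin d₂) ℝ) : ℝ := (Aᵀ * B).trace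

/-- Frobenius norm. -/
def frobNorm (A : Matrix (Fin d₁) (Fin d₂) ℝ) : ℝ := Real.sqrt (∑ i, ∑ j, (A i j) ^ 2)

/-- The (unordered, zero-padded) singular values of `A`: the square roots of the
eigenvalues of `AᵀA`. -/
def svals (A : Matrix (Fin d₁) (Fin d₂) ℝ) : Fin d₂ → ℝ :=
  fun j => Real.sqrt (((show (Aᵀ * A).IsHermitian by
    simpa using Matrix.isHermitian_conjTranspose_mul_self A)).eigenvalues j)

/-- Nuclear norm: sum of singular values. -/
def nuclearNorm (A : Matrix (Fin d₁) (Fin d₂) ℝ) : ℝ := ∑ j, svals A j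

/-- Operator norm: largest singular value. -/
def opNorm (A : Matrix (Fin d₁) (Fin d₂) ℝ) : ℝ := ⨆ j, svals A j

/-- The `d₁ × d₂` "diagonal" matrix whose diagonal entries are given by `s`. -/
def svdDiag (s : Fin (min d₁ d₂) → ℝ) : Matrix (Fin d₁) (Fin d₂) ℝ :=
  Matrix.of fun i j =>
    if h : (i : ℕ) = (j : ℕ) then
      s ⟨(i : ℕ), by have := i.isLt; have := j.isLt; omega⟩ else 0

/-- `s` is the nonincreasing sequence of singular values of `A`, witnessed by a
singular value decomposition `A = U D Vᵀ` with `U, V` orthogonal. -/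
def IsSVDOf (A : Matrix (Fin d₁) (Fin d₂) ℝ) (s : Fin (min d₁ d₂) → ℝ) : Prop :=
  Antitone s ∧ (∀ j, 0 ≤ s j) ∧
    ∃ (U : Matrix (Fin d₁) (Fin d₁) ℝ) (V : Matrix (Fin d₂) (Fin d₂) ℝ),
      Uᵀ * U = 1 ∧ U * Uᵀ = 1 ∧ Vᵀ * V = 1 ∧ V * Vᵀ = 1 ∧ A = U * svdDiag s * Vᵀ

/-- Assumption 1 of the paper on the univariate regularizer `p = p_λ`,
with concave part `q_λ t = p t - λ * |t|`. -/
structure Assumption1 (p : ℝ → ℝ) (lam μ : ℝ) : Prop where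
  zero : p 0 = 0
  even : ∀ t : ℝ, p (-t) = p t
  slope_anti : AntitoneOn (fun t => p t / t) (Set.Ioi (0 : ℝ))
  diffable : ∀ t : ℝ, t ≠ 0 → DifferentiableAt ℝ p t
  deriv_tendsto : Filter.Tendsto (deriv p) (nhdsWithin 0 (Set.Ioi 0)) (nhds lam)
  mono : MonotoneOn p (Set.Ici (0 : ℝ))
  concave : ConcaveOn ℝ (Set.Ici (0 : ℝ)) p
  weakconv : ∀ t t' : ℝ, 0 < t' → t' < t →
    deriv (fun u => p u - lam * |u|) t - deriv (fun u => p u - lam * |u|) t' ≥ -μ * (t - t')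

/-- The spectral regularizer `P_λ(Θ) = ∑ⱼ p_λ(σⱼ(Θ))`. -/
def Pl (p : ℝ → ℝ) (A : Matrix (Fin d₁) (Fin d₂) ℝ) : ℝ := ∑ j, p (svals A j)

end

/-!
Write `Δ = Θᵗ - Θ̂`. The cone bound (b) gives `‖Δ‖_* ≤ c ‖Δ‖_F + ε` with
`c² = 32 R_q / λ^q`, hence `‖Δ‖_*² ≤ 2c² ‖Δ‖_F² + 2ε²`, and (c) makes the curvature lost to
restricted strong convexity, `τ₂ ‖Δ‖_*²`, at most `(2α₂ - μ)/4 · ‖Δ‖_F² + 2τε²`. Adding restricted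
strong convexity of `L` and weak convexity of `Q` then bounds the Taylor error of `L + Q` in either
direction by `(2α₂ - μ)/4 · ‖Δ‖_F² - 2τε²`. For the excess objective, the subgradient inequality
for `G` and the first-order condition at `Θ̂` show that `Ψ(Θᵗ) - Ψ(Θ̂)` dominates the Taylor error
of `L + Q` at `(Θᵗ, Θ̂)`.
-/

section MatrixNorms

variable {d₁ d₂ : ℕ}

lemma tinner_add_left (A B C : Matrix (Fin d₁) (Fin d₂) ℝ) :
    tinner (A + B) C = tinner A C + tinner B C := by
  simp [tinner, Matrix.transpose_add, Matrix.add_mul]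

lemma tinner_smul_left (r : ℝ) (A B : Matrix (Fin d₁) (Fin d₂) ℝ) :
    tinner (r • A) B = r * tinner A B := by
  simp [tinner, Matrix.transpose_smul, Matrix.smul_mul]

lemma svals_neg (A : Matrix (Fin d₁) (Fin d₂) ℝ) : svals (-A) = svals A := by
  have hAA : (-A)ᵀ * (-A) = Aᵀ * A := by simp
  unfold svals
  congr! 4

lemma nuclearNorm_neg (A : Matrix (Fin d₁) (Fin d₂) ℝ) : nuclearNorm (-A) = nuclearNorm A := by
  rw [nuclearNorm, svals_neg, nuclearNorm]

lemma nuclearNorm_nonneg (A : Matrix (Fin d₁) (Fin d₂) ℝ) : 0 ≤ nuclearNorm A :=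
  Finset.sum_nonneg fun _ _ => Real.sqrt_nonneg _

lemma nuclearNorm_sub_comm (A B : Matrix (Fin d₁) (Fin d₂) ℝ) :
    nuclearNorm (A - B) = nuclearNorm (B - A) := by
  rw [← neg_sub, nuclearNorm_neg]

lemma frobNorm_sub_comm (A B : Matrix (Fin d₁) (Fin d₂) ℝ) :
    frobNorm (A - B) = frobNorm (B - A) := by
  simp only [frobNorm, Matrix.sub_apply]
  congr! 3
  ring

end MatrixNorms

section ConeBound

lemma mul_sq_le_of_le_mul_add {τ c κ N F ε : ℝ} (hτ : 0 ≤ τ) (hN : 0 ≤ N)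
    (hcone : N ≤ c * F + ε) (hκ : 2 * τ * c ^ 2 ≤ κ) :
    τ * N ^ 2 ≤ κ * F ^ 2 + 2 * τ * ε ^ 2 := by
  have hsq : N ^ 2 ≤ 2 * c ^ 2 * F ^ 2 + 2 * ε ^ 2 := by
    nlinarith [sq_nonneg (c * F - ε)]
  nlinarith [mul_le_mul_of_nonneg_left hsq hτ, mul_le_mul_of_nonneg_right hκ (sq_nonneg F)]

lemma cone_constant_sq {lam qq Rq : ℝ} (hlam : 0 < lam) (hRq : 0 ≤ Rq) :
    (4 * Real.sqrt 2 * lam ^ (-(qq / 2)) * Rq ^ ((1 : ℝ) / 2)) ^ 2 = 32 * Rq / lam ^ qq := by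
  have hlam_sq : (lam ^ (-(qq / 2))) ^ 2 = (lam ^ qq)⁻¹ := by
    rw [← Real.rpow_mul_natCast hlam.le, ← Real.rpow_neg hlam.le]
    ring_nf
  rw [mul_pow, mul_pow, mul_pow, hlam_sq, ← Real.sqrt_eq_rpow, Real.sq_sqrt hRq,
    Real.sq_sqrt zero_le_two]
  ring

lemma nuclearNorm_sq_le_of_cone {d₁ d₂ : ℕ} {τ κ lam qq Rq ε : ℝ} {Δ : Matrix (Fin d₁) (Fin d₂) ℝ}
    (hτ : 0 ≤ τ) (hκ : 0 < κ) (hlam : 0 < lam) (hRq : 0 ≤ Rq)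
    (hcone : nuclearNorm Δ ≤
      4 * Real.sqrt 2 * lam ^ (-(qq / 2)) * Rq ^ ((1 : ℝ) / 2) * frobNorm Δ + ε)
    (hlam_q : lam ^ qq ≥ 256 * τ * Rq / κ) :
    τ * nuclearNorm Δ ^ 2 ≤ κ / 4 * frobNorm Δ ^ 2 + 2 * τ * ε ^ 2 := by
  refine mul_sq_le_of_le_mul_add hτ (nuclearNorm_nonneg Δ) hcone ?_
  have hlam_q' : 256 * τ * Rq ≤ lam ^ qq * κ := by rwa [ge_iff_le, div_le_iff₀ hκ] at hlam_q
  rw [cone_constant_sq hlam hRq, show 2 * τ * (32 * Rq / lam ^ qq) = 64 * τ * Rq / lam ^ qq by ring,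
    div_le_iff₀ (Real.rpow_pos_of_pos hlam qq)]
  linarith

end ConeBound

section TaylorError

variable {d₁ d₂ : ℕ}

local notation "𝕄" => Matrix (Fin d₁) (Fin d₂) ℝ

/-- The paper's `T_f(Θ, Θ')`, with `g` standing for the gradient of `f`. -/
def taylorError (f : 𝕄 → ℝ) (g : 𝕄 → 𝕄) (Θ Θ' : 𝕄) : ℝ :=
  f Θ - f Θ' - tinner (g Θ') (Θ - Θ')

lemma taylorError_add (f₁ f₂ : 𝕄 → ℝ) (g₁ g₂ : 𝕄 → 𝕄) (Θ Θ' : 𝕄) :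
    taylorError (f₁ + f₂) (g₁ + g₂) Θ Θ' = taylorError f₁ g₁ Θ Θ' + taylorError f₂ g₂ Θ Θ' := by
  simp only [taylorError, Pi.add_apply, tinner_add_left]
  ring

lemma taylorError_add_ge {L Q : 𝕄 → ℝ} {gradL gradQ : 𝕄 → 𝕄} {α₂ τ₂ μ : ℝ}
    (hRSC : ∀ Θ Θ', taylorError L gradL Θ Θ' ≥
      α₂ * frobNorm (Θ - Θ') ^ 2 - τ₂ * nuclearNorm (Θ - Θ') ^ 2)
    (hQ : ∀ Θ Θ', taylorError Q gradQ Θ Θ' ≥ -(μ / 2 * frobNorm (Θ - Θ') ^ 2)) (Θ Θ' : 𝕄) :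
    taylorError (L + Q) (gradL + gradQ) Θ Θ' ≥
      (α₂ - μ / 2) * frobNorm (Θ - Θ') ^ 2 - τ₂ * nuclearNorm (Θ - Θ') ^ 2 := by
  rw [taylorError_add]
  linarith [hRSC Θ Θ', hQ Θ Θ']

lemma taylorError_le_sub_of_subgradient {f : 𝕄 → ℝ} {g : 𝕄 → 𝕄} {lam : ℝ} (hlam : 0 ≤ lam)
    {G Θ Θhat : 𝕄} (hG : nuclearNorm Θ ≥ nuclearNorm Θhat + tinner G (Θ - Θhat))
    (hopt : tinner (g Θhat + lam • G) (Θ - Θhat) ≥ 0) :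
    taylorError f g Θ Θhat ≤ f Θ + lam * nuclearNorm Θ - (f Θhat + lam * nuclearNorm Θhat) := by
  rw [tinner_add_left, tinner_smul_left] at hopt
  unfold taylorError
  nlinarith [mul_le_mul_of_nonneg_left hG hlam]

end TaylorError

theorem taylor_error_and_excess_lower_bounds_general {d₁ d₂ : ℕ}
    (μ α₂ τ₂ τ lam qq Rq ε : ℝ)
    (hα : μ / 2 < α₂) (hτ₂ : 0 < τ₂) (hττ : τ₂ ≤ τ) (hlam : 0 < lam)
    (hRq : 0 < Rq)
    (L Q : Matrix (Fin d₁) (Fin d₂) ℝ → ℝ)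
    (gradL gradQ : Matrix (Fin d₁) (Fin d₂) ℝ → Matrix (Fin d₁) (Fin d₂) ℝ)
    (hRSC : ∀ Θ Θ' : Matrix (Fin d₁) (Fin d₂) ℝ,
      L Θ - L Θ' - tinner (gradL Θ') (Θ - Θ') ≥
        α₂ * frobNorm (Θ - Θ') ^ 2 - τ₂ * nuclearNorm (Θ - Θ') ^ 2)
    (hQlow : ∀ Θ Θ' : Matrix (Fin d₁) (Fin d₂) ℝ,
      Q Θ ≥ Q Θ' + tinner (gradQ Θ') (Θ - Θ') - μ / 2 * frobNorm (Θ - Θ') ^ 2)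
    (Θhat Θt : Matrix (Fin d₁) (Fin d₂) ℝ)
    (ha : ∃ G : Matrix (Fin d₁) (Fin d₂) ℝ,
      (∀ Θ : Matrix (Fin d₁) (Fin d₂) ℝ,
        nuclearNorm Θ ≥ nuclearNorm Θhat + tinner G (Θ - Θhat)) ∧
      tinner (gradL Θhat + gradQ Θhat + lam • G) (Θt - Θhat) ≥ 0)
    (hb : nuclearNorm (Θt - Θhat) ≤
      4 * Real.sqrt 2 * lam ^ (-(qq / 2)) * Rq ^ ((1 : ℝ) / 2) * frobNorm (Θt - Θhat) + ε)
    (hc : lam ^ qq ≥ 256 * τ * Rq / (2 * α₂ - μ)) :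
    (L Θhat + Q Θhat) - (L Θt + Q Θt) - tinner (gradL Θt + gradQ Θt) (Θhat - Θt) ≥
      -2 * τ * ε ^ 2 ∧
    (L Θt + Q Θt + lam * nuclearNorm Θt) - (L Θhat + Q Θhat + lam * nuclearNorm Θhat) ≥
      (2 * α₂ - μ) / 4 * frobNorm (Θt - Θhat) ^ 2 - 2 * τ * ε ^ 2 := by
  obtain ⟨G, hG, hopt⟩ := ha
  have hκ : 0 < 2 * α₂ - μ := by linarith
  have hcurv : τ₂ * nuclearNorm (Θt - Θhat) ^ 2 ≤
      (2 * α₂ - μ) / 4 * frobNorm (Θt - Θhat) ^ 2 + 2 * τ * ε ^ 2 :=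
    (mul_le_mul_of_nonneg_right hττ (sq_nonneg _)).trans
      (nuclearNorm_sq_le_of_cone (by linarith) hκ hlam hRq.le hb hc)
  have hQ : ∀ Θ Θ', taylorError Q gradQ Θ Θ' ≥ -(μ / 2 * frobNorm (Θ - Θ') ^ 2) := fun Θ Θ' => by
    unfold taylorError; linarith [hQlow Θ Θ']
  have hT := taylorError_add_ge hRSC hQ
  have hF := mul_nonneg hκ.le (sq_nonneg (frobNorm (Θt - Θhat)))
  constructor
  · show taylorError (L + Q) (gradL + gradQ) Θhat Θt ≥ _
    have hT' := hT Θhat Θt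
    rw [frobNorm_sub_comm, nuclearNorm_sub_comm] at hT'
    linarith
  · show (L + Q) Θt + lam * nuclearNorm Θt - ((L + Q) Θhat + lam * nuclearNorm Θhat) ≥ _
    linarith [hT Θt Θhat,
      taylorError_le_sub_of_subgradient (f := L + Q) (g := gradL + gradQ) hlam.le (hG Θt) hopt]

/-- Inequalities (lem-bound-T1) and (lem-bound-T2) of Lemma 6: lower bounds on the
modified Taylor error `T̄(Θ̂, Θᵗ)` and on the excess objective `Ψ(Θᵗ) - Ψ(Θ̂)`. -/
theorem taylor_error_and_excess_lower_bounds {d₁ d₂ : ℕ}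
    (μ α₂ τ₂ τ lam qq Rq ε : ℝ)
    (hμ : 0 ≤ μ) (hα : μ / 2 < α₂) (hτ₂ : 0 < τ₂) (hττ : τ₂ ≤ τ) (hlam : 0 < lam)
    (hqq0 : 0 < qq) (hqq1 : qq ≤ 1) (hRq : 0 < Rq) (hε : 0 ≤ ε)
    (L Q : Matrix (Fin d₁) (Fin d₂) ℝ → ℝ)
    (gradL gradQ : Matrix (Fin d₁) (Fin d₂) ℝ → Matrix (Fin d₁) (Fin d₂) ℝ)
    (hdL : Differentiable ℝ L)
    (hgL : ∀ Θ Δ : Matrix (Fin d₁) (Fin d₂) ℝ, fderiv ℝ L Θ Δ = tinner (gradL Θ) Δ)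
    (hdQ : Differentiable ℝ Q)
    (hgQ : ∀ Θ Δ : Matrix (Fin d₁) (Fin d₂) ℝ, fderiv ℝ Q Θ Δ = tinner (gradQ Θ) Δ)
    (hRSC : ∀ Θ Θ' : Matrix (Fin d₁) (Fin d₂) ℝ,
      L Θ - L Θ' - tinner (gradL Θ') (Θ - Θ') ≥
        α₂ * frobNorm (Θ - Θ') ^ 2 - τ₂ * nuclearNorm (Θ - Θ') ^ 2)
    (hQlow : ∀ Θ Θ' : Matrix (Fin d₁) (Fin d₂) ℝ,
      Q Θ ≥ Q Θ' + tinner (gradQ Θ') (Θ - Θ') - μ / 2 * frobNorm (Θ - Θ') ^ 2)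
    (Θhat Θt : Matrix (Fin d₁) (Fin d₂) ℝ)
    (ha : ∃ G : Matrix (Fin d₁) (Fin d₂) ℝ,
      (∀ Θ : Matrix (Fin d₁) (Fin d₂) ℝ,
        nuclearNorm Θ ≥ nuclearNorm Θhat + tinner G (Θ - Θhat)) ∧
      tinner (gradL Θhat + gradQ Θhat + lam • G) (Θt - Θhat) ≥ 0)
    (hb : nuclearNorm (Θt - Θhat) ≤
      4 * Real.sqrt 2 * lam ^ (-(qq / 2)) * Rq ^ ((1 : ℝ) / 2) * frobNorm (Θt - Θhat) + ε)
    (hc : lam ^ qq ≥ 256 * τ * Rq / (2 * α₂ - μ)) :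
    (L Θhat + Q Θhat) - (L Θt + Q Θt) - tinner (gradL Θt + gradQ Θt) (Θhat - Θt) ≥
      -2 * τ * ε ^ 2 ∧
    (L Θt + Q Θt + lam * nuclearNorm Θt) - (L Θhat + Q Θhat + lam * nuclearNorm Θhat) ≥
      (2 * α₂ - μ) / 4 * frobNorm (Θt - Θhat) ^ 2 - 2 * τ * ε ^ 2 :=
  taylor_error_and_excess_lower_bounds_general μ α₂ τ₂ τ lam qq Rq ε hα hτ₂ hττ hlam hRq L Q gradL
    gradQ hRSC hQlow Θhat Θt ha hb hc
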